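/- arXiv:2312.01516 — 7 statements merged into one kernel-verified Lean document; each statement's English description precedes it below -/
import Mathlib

section
/- Let G and H be finite simple graphs and U a quantum isomorphism from G to H (a magic unitary over a unital C*-algebra with U·Adj(G) = Adj(H)·U). If x, y ∈ V(H), a, b ∈ V(G) and u_{xa}·u_{yb} ≠ 0, then d_H(x,y) = d_G(a,b), where d denotes graph distance (possibly infinite). -/
/-- A (possibly rectangular) magic unitary over a unital C*-algebra: a matrix of
self-adjoint projections whose rows and columns sum to 1, with orthogonality along
rows and columns. -/
def IsMagicUnitary {X : Type*} [CStarAlgebra X] {m n : Type*} [Fintype m] [Fintype n]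
    (u : Matrix m n X) : Prop :=
  (∀ i j, IsSelfAdjoint (u i j)) ∧ (∀ i j, u i j * u i j = u i j) ∧
  (∀ i, ∑ j, u i j = 1) ∧ (∀ j, ∑ i, u i j = 1) ∧
  (∀ i j l, j ≠ l → u i j * u i l = 0) ∧
  (∀ j i l, i ≠ l → u i j * u l j = 0)

/-- If U is a quantum isomorphism from G to H (a magic unitary indexed by V(H) × V(G)
with U·Adj(G) = Adj(H)·U) and u_{xa}·u_{yb} ≠ 0, then the graph distances (possibly
infinite) satisfy d_H(x,y) = d_G(a,b). -/
theorem edist_eq_of_quantum_isomorphism {VG VH : Type*} [Fintype VG] [Fintype VH]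
    (G : SimpleGraph VG) (H : SimpleGraph VH)
    [DecidableRel G.Adj] [DecidableRel H.Adj]
    {X : Type*} [CStarAlgebra X] (U : Matrix VH VG X) (hU : IsMagicUnitary U)
    (hint : U * G.adjMatrix X = H.adjMatrix X * U)
    {x y : VH} {a b : VG} (h : U x a * U y b ≠ 0) :
    H.edist x y = G.edist a b := by
  classical
  obtain ⟨hsa, hidem, hrow, hcol, horth_row, horth_col⟩ := hU
  -- intertwining for all powers
  have hpow : ∀ k : ℕ, U * (G.adjMatrix X) ^ k = (H.adjMatrix X) ^ k * U := by
    intro k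
    induction k with
    | zero => simp
    | succ k ih =>
      rw [pow_succ, ← Matrix.mul_assoc, ih, Matrix.mul_assoc, hint, ← Matrix.mul_assoc, ← pow_succ]
  -- adjMatrix over X as cast of adjMatrix over ℕ
  have hmapG : ((Nat.castRingHom X).mapMatrix (G.adjMatrix ℕ)) = G.adjMatrix X := by
    ext i j
    by_cases hij : G.Adj i j <;>
      simp [Matrix.map_apply, SimpleGraph.adjMatrix_apply, hij]
  have hmapH : ((Nat.castRingHom X).mapMatrix (H.adjMatrix ℕ)) = H.adjMatrix X := by
    ext i j
    by_cases hij : H.Adj i j <;>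
      simp [Matrix.map_apply, SimpleGraph.adjMatrix_apply, hij]
  have hcastG : ∀ k (c d : VG), (G.adjMatrix X ^ k) c d = (((G.adjMatrix ℕ ^ k) c d : ℕ) : X) := by
    intro k c d
    rw [← hmapG, ← map_pow]
    rfl
  have hcastH : ∀ k (z w : VH), (H.adjMatrix X ^ k) z w = (((H.adjMatrix ℕ ^ k) z w : ℕ) : X) := by
    intro k z w
    rw [← hmapH, ← map_pow]
    rfl
  have hna : ∀ (v : X) (n : ℕ), v * (n : X) = n • v := fun v n => by
    rw [← (Nat.cast_commute n v).eq, nsmul_eq_mul]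
  -- the key scalar equality
  have key : ∀ k : ℕ, (G.adjMatrix ℕ ^ k) a b = (H.adjMatrix ℕ ^ k) x y := by
    intro k
    have h1 : U x a * (U * G.adjMatrix X ^ k) x b * U y b
        = ((G.adjMatrix ℕ ^ k) a b : ℕ) • (U x a * U y b) := by
      rw [Matrix.mul_apply, Finset.mul_sum, Finset.sum_mul]
      rw [Finset.sum_eq_single a]
      · rw [hcastG, hna, mul_smul_comm, smul_mul_assoc, mul_assoc, ← mul_assoc, hidem x a]
      · intro c _ hca
        rw [← mul_assoc, horth_row x a c (Ne.symm hca), zero_mul, zero_mul]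
      · simp
    have h2 : U x a * ((H.adjMatrix X ^ k) * U) x b * U y b
        = ((H.adjMatrix ℕ ^ k) x y : ℕ) • (U x a * U y b) := by
      rw [Matrix.mul_apply, Finset.mul_sum, Finset.sum_mul]
      rw [Finset.sum_eq_single y]
      · rw [hcastH, ← nsmul_eq_mul, mul_smul_comm, smul_mul_assoc, mul_assoc, hidem y b]
      · intro z _ hzy
        rw [mul_assoc, mul_assoc, horth_col b z y hzy, mul_zero, mul_zero]
      · simp
    have heq : ((G.adjMatrix ℕ ^ k) a b : ℕ) • (U x a * U y b)
        = ((H.adjMatrix ℕ ^ k) x y : ℕ) • (U x a * U y b) := by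
      rw [← h1, ← h2, hpow k]
    have : (((G.adjMatrix ℕ ^ k) a b : ℕ) : ℂ) • (U x a * U y b)
        = (((H.adjMatrix ℕ ^ k) x y : ℕ) : ℂ) • (U x a * U y b) := by
      rw [Nat.cast_smul_eq_nsmul, Nat.cast_smul_eq_nsmul]; exact heq
    have hsub : ((((G.adjMatrix ℕ ^ k) a b : ℕ) : ℂ) - (((H.adjMatrix ℕ ^ k) x y : ℕ) : ℂ))
        • (U x a * U y b) = 0 := by
      rw [sub_smul, this, sub_self]
    rcases smul_eq_zero.mp hsub with hc | hc
    · exact_mod_cast sub_eq_zero.mp hc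
    · exact absurd hc h
  -- walks of length k correspond
  have hwalk : ∀ k : ℕ, Nonempty {p : G.Walk a b // p.length = k} ↔
      Nonempty {p : H.Walk x y // p.length = k} := by
    intro k
    have hG := G.adjMatrix_pow_apply_eq_card_walk (α := ℕ) k a b
    have hH := H.adjMatrix_pow_apply_eq_card_walk (α := ℕ) k x y
    rw [← Fintype.card_pos_iff, ← Fintype.card_pos_iff]
    constructor <;> intro hpos
    · have : 0 < (G.adjMatrix ℕ ^ k) a b := by rw [hG]; exact_mod_cast hpos
      rw [key k] at this
      rw [hH] at this
      exact_mod_cast this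
    · have : 0 < (H.adjMatrix ℕ ^ k) x y := by rw [hH]; exact_mod_cast hpos
      rw [← key k] at this
      rw [hG] at this
      exact_mod_cast this
  -- conclude for edist
  apply le_antisymm
  · refine le_iInf fun p => ?_
    obtain ⟨q, hq⟩ := (hwalk p.length).mp ⟨p, rfl⟩
    calc H.edist x y ≤ q.length := SimpleGraph.edist_le q
      _ = p.length := by rw [hq]
  · refine le_iInf fun q => ?_
    obtain ⟨p, hp⟩ := (hwalk q.length).mpr ⟨q, rfl⟩
    calc G.edist a b ≤ p.length := SimpleGraph.edist_le p
      _ = q.length := by rw [hp]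
end

section
/- If two finite simple graphs G and H are quantum isomorphic and G is connected, then H is connected. -/
/-- If G and H are quantum isomorphic (via a magic unitary over a nontrivial unital
C*-algebra intertwining the adjacency matrices) and G is connected, then H is
connected. -/
theorem connected_of_quantum_isomorphic {VG VH : Type*} [Fintype VG] [Fintype VH]
    (G : SimpleGraph VG) (H : SimpleGraph VH)
    [DecidableRel G.Adj] [DecidableRel H.Adj]
    {X : Type*} [CStarAlgebra X] [Nontrivial X]
    (U : Matrix VH VG X) (hU : IsMagicUnitary U)
    (hint : U * G.adjMatrix X = H.adjMatrix X * U)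
    (hG : G.Connected) :
    H.Connected := by
  classical
  obtain ⟨hsa, hidem, hrow, hcol, horow, hocol⟩ := hU
  -- key orthogonality relation derived from the intertwiner
  have key : ∀ (i i' : VH) (j j' : VG), G.Adj j j' → ¬ H.Adj i i' →
      U i j * U i' j' = 0 := by
    intro i i' j j' hjj' hii'
    have h := congrFun (congrFun hint i) j'
    rw [Matrix.mul_apply, Matrix.mul_apply] at h
    have hL : U i j * ∑ k, U i k * (G.adjMatrix X) k j' = U i j := by
      rw [Finset.mul_sum, Finset.sum_eq_single j]
      · simp [SimpleGraph.adjMatrix_apply, hjj', ← mul_assoc, hidem i j]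
      · intro b _ hb
        rw [← mul_assoc, horow i j b (Ne.symm hb), zero_mul]
      · intro hj; exact absurd (Finset.mem_univ j) hj
    have hR : (∑ l, (H.adjMatrix X) i l * U l j') * U i' j' = 0 := by
      rw [Finset.sum_mul, Finset.sum_eq_single i']
      · simp [SimpleGraph.adjMatrix_apply, hii']
      · intro b _ hb
        rw [mul_assoc, hocol j' b i' hb, mul_zero]
      · intro hi; exact absurd (Finset.mem_univ i') hi
    calc U i j * U i' j' = (U i j * ∑ k, U i k * (G.adjMatrix X) k j') * U i' j' := by
          rw [hL]
      _ = U i j * ((∑ l, (H.adjMatrix X) i l * U l j') * U i' j') := by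
          rw [h, mul_assoc]
      _ = 0 := by rw [hR, mul_zero]
  have hVG : Nonempty VG := hG.nonempty
  obtain ⟨j0⟩ := hVG
  haveI hVH : Nonempty VH := by
    by_contra hne
    rw [not_nonempty_iff] at hne
    have := hcol j0
    rw [Finset.univ_eq_empty, Finset.sum_empty] at this
    exact zero_ne_one this
  rw [SimpleGraph.connected_iff]
  refine ⟨?_, hVH⟩
  by_contra hH
  rw [SimpleGraph.Preconnected] at hH
  push_neg at hH
  obtain ⟨i0, i1, hreach⟩ := hH
  set F : Finset VH := Finset.univ.filter (fun i => H.Reachable i0 i) with hF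
  have hmemF : ∀ i, i ∈ F ↔ H.Reachable i0 i := by
    intro i; simp [hF]
  have hi0F : i0 ∈ F := (hmemF i0).2 (SimpleGraph.Reachable.refl i0)
  have hi1F : i1 ∉ F := fun h => hreach ((hmemF i1).1 h)
  -- closure of the component under adjacency
  have hcl : ∀ i i', i ∈ F → i' ∉ F → ¬ H.Adj i i' := by
    intro i i' hi hi' hadj
    exact hi' ((hmemF i').2 (((hmemF i).1 hi).trans hadj.reachable))
  have hcl' : ∀ i i', i ∉ F → i' ∈ F → ¬ H.Adj i i' := by
    intro i i' hi hi' hadj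
    exact hi ((hmemF i).2 (((hmemF i').1 hi').trans hadj.symm.reachable))
  set p : VG → X := fun j => ∑ i ∈ F, U i j with hp
  -- p is constant along edges of G
  have pEdge : ∀ j j', G.Adj j j' → p j = p j' := by
    intro j j' hjj'
    have h1 : p j * p j' = p j := by
      rw [hp]
      simp only
      rw [Finset.sum_mul]
      refine Finset.sum_congr rfl ?_
      intro i hi
      have : ∑ i' ∈ F, U i j * U i' j' = ∑ i' ∈ Finset.univ, U i j * U i' j' := by
        refine Finset.sum_subset (Finset.subset_univ F) ?_
        intro i' _ hi'
        exact key i i' j j' hjj' (hcl i i' hi hi')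
      rw [Finset.mul_sum, this, ← Finset.mul_sum, hcol j', mul_one]
    have h2 : p j * p j' = p j' := by
      rw [hp]
      simp only
      rw [Finset.mul_sum]
      refine Finset.sum_congr rfl ?_
      intro i' hi'
      have : ∑ i ∈ F, U i j * U i' j' = ∑ i ∈ Finset.univ, U i j * U i' j' := by
        refine Finset.sum_subset (Finset.subset_univ F) ?_
        intro i _ hi
        exact key i i' j j' hjj' (hcl' i i' hi hi')
      rw [Finset.sum_mul, this, ← Finset.sum_mul, hcol j, one_mul]
    rw [← h1, h2]
  -- hence constant on G by connectivity
  have pconst : ∀ j, p j = p j0 := by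
    intro j
    obtain ⟨w⟩ := hG.preconnected j j0
    induction w with
    | nil => rfl
    | cons h w ih => exact (pEdge _ _ h).trans ih
  -- p j0 = 1, using i0 ∈ F
  have habs1 : p j0 = 1 := by
    have hterm : ∀ j, p j * U i0 j = U i0 j := by
      intro j
      rw [hp]
      simp only
      rw [Finset.sum_mul, Finset.sum_eq_single_of_mem i0 hi0F]
      · exact hidem i0 j
      · intro b _ hb
        exact hocol j b i0 hb
    calc p j0 = p j0 * 1 := (mul_one _).symm
      _ = p j0 * ∑ j, U i0 j := by rw [hrow i0]
      _ = ∑ j, p j0 * U i0 j := Finset.mul_sum _ _ _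
      _ = ∑ j, U i0 j := by
          refine Finset.sum_congr rfl fun j _ => ?_
          rw [← pconst j, hterm j]
      _ = 1 := hrow i0
  -- p j0 = 0, using i1 ∉ F
  have habs0 : p j0 = 0 := by
    have hterm : ∀ j, p j * U i1 j = 0 := by
      intro j
      rw [hp]
      simp only
      rw [Finset.sum_mul]
      refine Finset.sum_eq_zero fun b hb => ?_
      exact hocol j b i1 (fun h => hi1F (h ▸ hb))
    calc p j0 = p j0 * 1 := (mul_one _).symm
      _ = p j0 * ∑ j, U i1 j := by rw [hrow i1]
      _ = ∑ j, p j0 * U i1 j := Finset.mul_sum _ _ _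
      _ = ∑ j, (0 : X) := by
          refine Finset.sum_congr rfl fun j _ => ?_
          rw [← pconst j, hterm j]
      _ = 0 := Finset.sum_const_zero
  exact zero_ne_one (habs0 ▸ habs1)
end

section
/- Two quantum isomorphic finite simple graphs have the same number of edges. -/
/-- Two quantum isomorphic finite simple graphs have the same number of edges. -/
theorem card_edges_eq_of_quantum_isomorphic {VG VH : Type*} [Fintype VG] [Fintype VH]
    (G : SimpleGraph VG) (H : SimpleGraph VH)
    [DecidableRel G.Adj] [DecidableRel H.Adj]
    {X : Type*} [CStarAlgebra X] [Nontrivial X]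
    (U : Matrix VH VG X) (hU : IsMagicUnitary U)
    (hint : U * G.adjMatrix X = H.adjMatrix X * U) :
    Nat.card G.edgeSet = Nat.card H.edgeSet := by
  obtain ⟨-, -, hrow, hcol, -, -⟩ := hU
  -- row sums of adjacency matrices are degrees
  have hAG : ∀ k, ∑ g, G.adjMatrix X k g = (G.degree k : X) := fun k => by
    simpa [Matrix.mulVec, dotProduct] using
      (SimpleGraph.adjMatrix_mulVec_const_apply (G := G) (α := X) (a := (1 : X)) (v := k))
  have hAH : ∀ k, ∑ g, H.adjMatrix X k g = (H.degree k : X) := fun k => by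
    simpa [Matrix.mulVec, dotProduct] using
      (SimpleGraph.adjMatrix_mulVec_const_apply (G := H) (α := X) (a := (1 : X)) (v := k))
  -- sum all entries of both sides of the intertwining relation
  have L : ∑ h, ∑ g, (U * G.adjMatrix X) h g = ((∑ k, G.degree k : ℕ) : X) := by
    calc ∑ h, ∑ g, (U * G.adjMatrix X) h g
        = ∑ h, ∑ g, ∑ k, U h k * G.adjMatrix X k g := by
          simp only [Matrix.mul_apply]
      _ = ∑ h, ∑ k, U h k * ∑ g, G.adjMatrix X k g := by
          refine Finset.sum_congr rfl fun h _ => ?_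
          rw [Finset.sum_comm]
          exact Finset.sum_congr rfl fun k _ => (Finset.mul_sum _ _ _).symm
      _ = ∑ k, (∑ h, U h k) * (G.degree k : X) := by
          rw [Finset.sum_comm]
          refine Finset.sum_congr rfl fun k _ => ?_
          rw [Finset.sum_mul]
          exact Finset.sum_congr rfl fun h _ => by rw [hAG]
      _ = ∑ k, (G.degree k : X) := by
          refine Finset.sum_congr rfl fun k _ => by rw [hcol, one_mul]
      _ = ((∑ k, G.degree k : ℕ) : X) := by push_cast; rfl
  have R : ∑ h, ∑ g, (H.adjMatrix X * U) h g = ((∑ k, H.degree k : ℕ) : X) := by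
    calc ∑ h, ∑ g, (H.adjMatrix X * U) h g
        = ∑ h, ∑ g, ∑ k, H.adjMatrix X h k * U k g := by
          simp only [Matrix.mul_apply]
      _ = ∑ h, ∑ k, H.adjMatrix X h k * ∑ g, U k g := by
          refine Finset.sum_congr rfl fun h _ => ?_
          rw [Finset.sum_comm]
          exact Finset.sum_congr rfl fun k _ => (Finset.mul_sum _ _ _).symm
      _ = ∑ h, ∑ k, H.adjMatrix X h k := by
          refine Finset.sum_congr rfl fun h _ =>
            Finset.sum_congr rfl fun k _ => by rw [hrow, mul_one]
      _ = ∑ h, (H.degree h : X) := Finset.sum_congr rfl fun h _ => hAH h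
      _ = ((∑ k, H.degree k : ℕ) : X) := by push_cast; rfl
  -- X has characteristic zero
  have hinj : Function.Injective (algebraMap ℂ X) := fun a b hab => by
    have : ‖a - b‖ = 0 := by
      rw [← norm_algebraMap' X (a - b), map_sub, hab, sub_self, norm_zero]
    rwa [norm_eq_zero, sub_eq_zero] at this
  have : CharZero X := charZero_of_injective_algebraMap hinj
  have keyX : ((∑ k, G.degree k : ℕ) : X) = ((∑ k, H.degree k : ℕ) : X) := by
    rw [← L, ← R, hint]
  have key : ∑ k, G.degree k = ∑ k, H.degree k := Nat.cast_injective keyX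
  rw [SimpleGraph.sum_degrees_eq_twice_card_edges,
    SimpleGraph.sum_degrees_eq_twice_card_edges] at key
  have key2 : G.edgeFinset.card = H.edgeFinset.card := by omega
  rw [Nat.card_coe_set_eq, Nat.card_coe_set_eq,
    Set.ncard_eq_toFinset_card', Set.ncard_eq_toFinset_card']
  exact key2
end

section
/- Let G and H be quantum isomorphic graphs, and U a quantum isomorphism between them. If u_{xa} ≠ 0 for x ∈ V(H), a ∈ V(G), then r_H(x) = r_G(a), where r(v) = max over w of d(v,w) is the eccentricity of v. -/
/-- The eccentricity of a vertex: the supremum of the (possibly infinite) graph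
distances to all other vertices. -/
noncomputable def eccent {V : Type*} (G : SimpleGraph V) (v : V) : ℕ∞ :=
  ⨆ w, G.edist v w

section aux

variable {VG VH : Type*} [Fintype VG] [Fintype VH]
    (G : SimpleGraph VG) (H : SimpleGraph VH)
    [DecidableRel G.Adj] [DecidableRel H.Adj]
    {X : Type*} [CStarAlgebra X]

lemma adjPow_cast [DecidableEq VG] (k : ℕ) (a b : VG) :
    ((G.adjMatrix X) ^ k) a b = (((G.adjMatrix ℕ) ^ k) a b : ℕ) := by
  have : G.adjMatrix X = (Nat.castRingHom X).mapMatrix (G.adjMatrix ℕ) := by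
    ext i j; simp [SimpleGraph.adjMatrix]
  rw [this, ← map_pow]
  rfl

lemma intertwine_pow [DecidableEq VG] [DecidableEq VH] (U : Matrix VH VG X)
    (hint : U * G.adjMatrix X = H.adjMatrix X * U) (k : ℕ) :
    U * (G.adjMatrix X) ^ k = (H.adjMatrix X) ^ k * U := by
  induction k with
  | zero => simp
  | succ n ih =>
    rw [pow_succ, pow_succ, ← Matrix.mul_assoc, ih, Matrix.mul_assoc, hint, ← Matrix.mul_assoc]

lemma walk_count_eq [DecidableEq VG] [DecidableEq VH] (U : Matrix VH VG X)
    (hU : IsMagicUnitary U) (hint : U * G.adjMatrix X = H.adjMatrix X * U)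
    {x y : VH} {a b : VG} (hp : U x a * U y b ≠ 0) (k : ℕ) :
    ((G.adjMatrix ℕ) ^ k) a b = ((H.adjMatrix ℕ) ^ k) x y := by
  obtain ⟨hsa, hidem, hrow, hcol, hroworth, hcolorth⟩ := hU
  have hk := intertwine_pow G H U hint k
  have he : ∑ c, U x c * ((G.adjMatrix X) ^ k) c b
      = ∑ z, ((H.adjMatrix X) ^ k) x z * U z b := by
    have := congrFun (congrFun hk x) b
    rwa [Matrix.mul_apply, Matrix.mul_apply] at this
  -- multiply by U x a on the left and U y b on the right
  have key : U x a * ((G.adjMatrix X) ^ k) a b * U y b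
      = U x a * (((H.adjMatrix X) ^ k) x y * U y b) := by
    have h1 : U x a * (∑ c, U x c * ((G.adjMatrix X) ^ k) c b)
        = U x a * ((G.adjMatrix X) ^ k) a b := by
      rw [Finset.mul_sum]
      rw [Finset.sum_eq_single a]
      · rw [← mul_assoc, hidem]
      · intro c _ hc
        rw [← mul_assoc, hroworth x a c (Ne.symm hc), zero_mul]
      · simp
    have h2 : (∑ z, ((H.adjMatrix X) ^ k) x z * U z b) * U y b
        = ((H.adjMatrix X) ^ k) x y * U y b := by
      rw [Finset.sum_mul]
      rw [Finset.sum_eq_single y]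
      · rw [mul_assoc, hidem]
      · intro z _ hz
        rw [mul_assoc, hcolorth b z y hz, mul_zero]
      · simp
    calc U x a * ((G.adjMatrix X) ^ k) a b * U y b
        = U x a * (∑ c, U x c * ((G.adjMatrix X) ^ k) c b) * U y b := by rw [h1]
      _ = U x a * ((∑ z, ((H.adjMatrix X) ^ k) x z * U z b) * U y b) := by
          rw [he, mul_assoc]
      _ = U x a * (((H.adjMatrix X) ^ k) x y * U y b) := by rw [h2]
  set nG : ℕ := ((G.adjMatrix ℕ) ^ k) a b with hnG
  set nH : ℕ := ((H.adjMatrix ℕ) ^ k) x y with hnH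
  rw [adjPow_cast G, adjPow_cast H, ← hnG, ← hnH] at key
  have key2 : (nG : X) * (U x a * U y b) = (nH : X) * (U x a * U y b) := by
    calc (nG : X) * (U x a * U y b) = U x a * (nG : X) * U y b := by
          rw [← mul_assoc, ← (Nat.cast_commute nG (U x a)).eq]
      _ = U x a * ((nH : X) * U y b) := key
      _ = (nH : X) * (U x a * U y b) := by
          rw [← mul_assoc, ← (Nat.cast_commute nH (U x a)).eq, ← mul_assoc]
  -- deduce nG = nH
  by_contra hne
  have hc : ((nG : ℂ) - (nH : ℂ)) ≠ 0 := by
    intro h0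
    exact hne (Nat.cast_injective (sub_eq_zero.mp h0))
  have : ((nG : ℂ) - (nH : ℂ)) • (U x a * U y b) = 0 := by
    rw [sub_smul]
    have e1 : (nG : ℂ) • (U x a * U y b) = (nG : X) * (U x a * U y b) := by
      rw [Algebra.smul_def, map_natCast]
    have e2 : (nH : ℂ) • (U x a * U y b) = (nH : X) * (U x a * U y b) := by
      rw [Algebra.smul_def, map_natCast]
    rw [e1, e2, key2, sub_self]
  rcases smul_eq_zero.mp this with h0 | h0
  · exact hc h0
  · exact hp h0

lemma edist_eq_of_prod_ne_zero [DecidableEq VG] [DecidableEq VH] (U : Matrix VH VG X)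
    (hU : IsMagicUnitary U) (hint : U * G.adjMatrix X = H.adjMatrix X * U)
    {x y : VH} {a b : VG} (hp : U x a * U y b ≠ 0) :
    H.edist x y = G.edist a b := by
  have hcount : ∀ k : ℕ,
      Fintype.card {p : G.Walk a b | p.length = k}
        = Fintype.card {p : H.Walk x y | p.length = k} := by
    intro k
    have := walk_count_eq G H U hU hint hp k
    rw [SimpleGraph.adjMatrix_pow_apply_eq_card_walk,
      SimpleGraph.adjMatrix_pow_apply_eq_card_walk] at this
    exact this
  have hex : ∀ k : ℕ, (∃ p : G.Walk a b, p.length = k) ↔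
      (∃ p : H.Walk x y, p.length = k) := by
    intro k
    constructor
    · rintro ⟨p, hpl⟩
      have h1 : 0 < Fintype.card {p : G.Walk a b | p.length = k} :=
        Fintype.card_pos_iff.mpr ⟨⟨p, hpl⟩⟩
      rw [hcount k] at h1
      obtain ⟨⟨q, hq⟩⟩ := Fintype.card_pos_iff.mp h1
      exact ⟨q, hq⟩
    · rintro ⟨p, hpl⟩
      have h1 : 0 < Fintype.card {p : H.Walk x y | p.length = k} :=
        Fintype.card_pos_iff.mpr ⟨⟨p, hpl⟩⟩
      rw [← hcount k] at h1
      obtain ⟨⟨q, hq⟩⟩ := Fintype.card_pos_iff.mp h1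
      exact ⟨q, hq⟩
  apply le_antisymm
  · rcases eq_or_ne (G.edist a b) ⊤ with ht | ht
    · rw [ht]; exact le_top
    · obtain ⟨p, hpl⟩ := SimpleGraph.exists_walk_of_edist_ne_top ht
      obtain ⟨q, hq⟩ := (hex p.length).mp ⟨p, rfl⟩
      calc H.edist x y ≤ q.length := SimpleGraph.edist_le q
        _ = p.length := by rw [hq]
        _ = G.edist a b := hpl
  · rcases eq_or_ne (H.edist x y) ⊤ with ht | ht
    · rw [ht]; exact le_top
    · obtain ⟨p, hpl⟩ := SimpleGraph.exists_walk_of_edist_ne_top ht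
      obtain ⟨q, hq⟩ := (hex p.length).mpr ⟨p, rfl⟩
      calc G.edist a b ≤ q.length := SimpleGraph.edist_le q
        _ = p.length := by rw [hq]
        _ = H.edist x y := hpl

end aux

/-- A quantum isomorphism preserves eccentricities: if u_{xa} ≠ 0 then
r_H(x) = r_G(a). -/
theorem eccent_eq_of_quantum_isomorphism {VG VH : Type*} [Fintype VG] [Fintype VH]
    (G : SimpleGraph VG) (H : SimpleGraph VH)
    [DecidableRel G.Adj] [DecidableRel H.Adj]
    {X : Type*} [CStarAlgebra X] (U : Matrix VH VG X) (hU : IsMagicUnitary U)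
    (hint : U * G.adjMatrix X = H.adjMatrix X * U)
    {x : VH} {a : VG} (h : U x a ≠ 0) :
    eccent H x = eccent G a := by
  classical
  apply le_antisymm
  · apply iSup_le
    intro y
    have hsum : U x a * (∑ b, U y b) = U x a := by rw [hU.2.2.1 y, mul_one]
    have : ∑ b, U x a * U y b ≠ 0 := by
      rw [← Finset.mul_sum, hsum]; exact h
    obtain ⟨b, _, hb⟩ := Finset.exists_ne_zero_of_sum_ne_zero this
    calc H.edist x y = G.edist a b := edist_eq_of_prod_ne_zero G H U hU hint hb
      _ ≤ eccent G a := le_iSup _ b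
  · apply iSup_le
    intro b
    have hsum : U x a * (∑ y, U y b) = U x a := by rw [hU.2.2.2.1 b, mul_one]
    have : ∑ y, U x a * U y b ≠ 0 := by
      rw [← Finset.mul_sum, hsum]; exact h
    obtain ⟨y, _, hy⟩ := Finset.exists_ne_zero_of_sum_ne_zero this
    calc G.edist a b = H.edist x y := (edist_eq_of_prod_ne_zero G H U hU hint hy).symm
      _ ≤ eccent H x := le_iSup _ y
end

section
/- Any quantum isomorphism U from G to H vanishes on pairs mixing center and non-center: if a ∈ Z(G) and x ∈ V(H) \ Z(H), then u_{xa} = 0, and if a ∈ V(G) \ Z(G) and x ∈ Z(H), then u_{xa} = 0. In particular, quantum isomorphic graphs have quantum isomorphic centers. -/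
/-- The center of a graph: the set of vertices of minimal eccentricity. -/
noncomputable def center {V : Type*} (G : SimpleGraph V) : Set V :=
  {v | ∀ w, eccent G v ≤ eccent G w}

section Aux

variable {VG VH : Type*} [Fintype VG] [Fintype VH] [DecidableEq VG] [DecidableEq VH]
    {G : SimpleGraph VG} {H : SimpleGraph VH}
    [DecidableRel G.Adj] [DecidableRel H.Adj]
    {X : Type*} [CStarAlgebra X] {U : Matrix VH VG X}

lemma qi_pow_intertwine (hint : U * G.adjMatrix X = H.adjMatrix X * U) (k : ℕ) :
    U * (G.adjMatrix X) ^ k = (H.adjMatrix X) ^ k * U := by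
  induction k with
  | zero => simp
  | succ n ih =>
      rw [pow_succ, pow_succ, ← Matrix.mul_assoc, ih, Matrix.mul_assoc, hint,
        ← Matrix.mul_assoc]

lemma qi_central (k : ℕ) (c b : VG) (z : X) :
    Commute ((G.adjMatrix X ^ k) c b) z := by
  classical
  rw [SimpleGraph.adjMatrix_pow_apply_eq_card_walk]
  exact Nat.cast_commute _ _

lemma qi_centralH (k : ℕ) (x w : VH) (z : X) :
    Commute ((H.adjMatrix X ^ k) x w) z := by
  classical
  rw [SimpleGraph.adjMatrix_pow_apply_eq_card_walk]
  exact Nat.cast_commute _ _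

lemma qi_key (hU : IsMagicUnitary U) (hint : U * G.adjMatrix X = H.adjMatrix X * U)
    (a b : VG) (x y : VH) (k : ℕ) :
    ((G.adjMatrix X) ^ k) a b * (U x a * U y b)
      = ((H.adjMatrix X) ^ k) x y * (U x a * U y b) := by
  classical
  have hmat := congrFun (congrFun (qi_pow_intertwine hint k) x) b
  have h1 : U x a * ((U * (G.adjMatrix X) ^ k) x b * U y b)
      = ((G.adjMatrix X) ^ k) a b * (U x a * U y b) := by
    rw [Matrix.mul_apply, Finset.sum_mul, Finset.mul_sum]
    rw [Finset.sum_eq_single a]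
    · rw [show U x a * (U x a * ((G.adjMatrix X ^ k) a b) * U y b)
          = (U x a * U x a) * (((G.adjMatrix X ^ k) a b) * U y b) by
            simp only [mul_assoc],
        hU.2.1, ← mul_assoc, ← (qi_central k a b (U x a)).eq, mul_assoc]
    · intro c _ hc
      rw [show U x a * (U x c * ((G.adjMatrix X ^ k) c b) * U y b)
          = (U x a * U x c) * (((G.adjMatrix X ^ k) c b) * U y b) by
            simp only [mul_assoc],
        hU.2.2.2.2.1 x a c (Ne.symm hc), zero_mul]
    · intro h; exact absurd (Finset.mem_univ a) h
  have h2 : U x a * (((H.adjMatrix X) ^ k * U) x b * U y b)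
      = ((H.adjMatrix X) ^ k) x y * (U x a * U y b) := by
    rw [Matrix.mul_apply, Finset.sum_mul, Finset.mul_sum]
    rw [Finset.sum_eq_single y]
    · rw [show U x a * (((H.adjMatrix X ^ k) x y) * U y b * U y b)
          = U x a * ((H.adjMatrix X ^ k) x y * (U y b * U y b)) by
            simp only [mul_assoc],
        hU.2.1, ← mul_assoc, ← (qi_centralH k x y (U x a)).eq, mul_assoc]
    · intro w _ hw
      rw [show U x a * (((H.adjMatrix X ^ k) x w) * U w b * U y b)
          = U x a * ((H.adjMatrix X ^ k) x w * (U w b * U y b)) by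
            simp only [mul_assoc],
        hU.2.2.2.2.2 b w y hw, mul_zero, mul_zero]
    · intro h; exact absurd (Finset.mem_univ y) h
  rw [← h1, ← h2, hmat]

lemma qi_nat_mul_eq_zero {m : ℕ} (hm : m ≠ 0) {p : X} (h : (m : X) * p = 0) : p = 0 := by
  have h1 : (m : ℂ) • p = 0 := by
    rw [Nat.cast_smul_eq_nsmul, nsmul_eq_mul, h]
  have h2 : p = ((m : ℂ)⁻¹ * (m : ℂ)) • p := by
    rw [inv_mul_cancel₀ (by exact_mod_cast hm), one_smul]
  rw [h2, mul_smul, h1, smul_zero]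

lemma qi_vanish (hU : IsMagicUnitary U) (hint : U * G.adjMatrix X = H.adjMatrix X * U)
    {a b : VG} {x y : VH} (hne : G.edist a b ≠ H.edist x y) : U x a * U y b = 0 := by
  classical
  rcases lt_or_gt_of_ne hne with hlt | hlt
  · -- G.edist a b < H.edist x y
    obtain ⟨k, hk⟩ := WithTop.ne_top_iff_exists.mp (hlt.trans_le le_top).ne
    have hk' : G.edist a b = (k : ℕ∞) := hk.symm
    have hlt' : (k : ℕ∞) < H.edist x y := hk'.symm.trans_lt hlt
    have key := qi_key hU hint a b x y k
    rw [SimpleGraph.adjMatrix_pow_apply_eq_card_walk,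
      SimpleGraph.adjMatrix_pow_apply_eq_card_walk] at key
    have hE : IsEmpty { p : H.Walk x y | p.length = k } := by
      refine ⟨fun q => ?_⟩
      obtain ⟨p, hp⟩ := q
      have hp' : p.length = k := hp
      have hle := SimpleGraph.edist_le p
      rw [show (p.length : ℕ∞) = (k : ℕ∞) from Nat.cast_inj.mpr hp'] at hle
      exact absurd hlt' (not_lt.mpr hle)
    have hc0 : Fintype.card { p : H.Walk x y | p.length = k } = 0 :=
      Fintype.card_eq_zero_iff.mpr hE
    rw [hc0, Nat.cast_zero, zero_mul] at key
    obtain ⟨p, hp⟩ := SimpleGraph.exists_walk_of_edist_eq_coe hk'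
    haveI : Nonempty { p : G.Walk a b | p.length = k } := ⟨⟨p, hp⟩⟩
    exact qi_nat_mul_eq_zero Fintype.card_ne_zero key
  · -- H.edist x y < G.edist a b
    obtain ⟨k, hk⟩ := WithTop.ne_top_iff_exists.mp (hlt.trans_le le_top).ne
    have hk' : H.edist x y = (k : ℕ∞) := hk.symm
    have hlt' : (k : ℕ∞) < G.edist a b := hk'.symm.trans_lt hlt
    have key := qi_key hU hint a b x y k
    rw [SimpleGraph.adjMatrix_pow_apply_eq_card_walk,
      SimpleGraph.adjMatrix_pow_apply_eq_card_walk] at key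
    have hE : IsEmpty { p : G.Walk a b | p.length = k } := by
      refine ⟨fun q => ?_⟩
      obtain ⟨p, hp⟩ := q
      have hp' : p.length = k := hp
      have hle := SimpleGraph.edist_le p
      rw [show (p.length : ℕ∞) = (k : ℕ∞) from Nat.cast_inj.mpr hp'] at hle
      exact absurd hlt' (not_lt.mpr hle)
    have hc0 : Fintype.card { p : G.Walk a b | p.length = k } = 0 :=
      Fintype.card_eq_zero_iff.mpr hE
    rw [hc0, Nat.cast_zero, zero_mul] at key
    obtain ⟨p, hp⟩ := SimpleGraph.exists_walk_of_edist_eq_coe hk'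
    haveI : Nonempty { p : H.Walk x y | p.length = k } := ⟨⟨p, hp⟩⟩
    exact qi_nat_mul_eq_zero Fintype.card_ne_zero key.symm

lemma qi_vanish' (hU : IsMagicUnitary U) (hint : U * G.adjMatrix X = H.adjMatrix X * U)
    {a b : VG} {x y : VH} (hne : G.edist a b ≠ H.edist x y) : U y b * U x a = 0 := by
  have h := qi_vanish hU hint hne
  have : star (U x a * U y b) = U y b * U x a := by
    rw [star_mul, (hU.1 y b).star_eq, (hU.1 x a).star_eq]
  rw [← this, h, star_zero]

lemma qi_ecc_eq (hU : IsMagicUnitary U) (hint : U * G.adjMatrix X = H.adjMatrix X * U)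
    {a : VG} {x : VH} (h : U x a ≠ 0) : eccent H x = eccent G a := by
  apply le_antisymm
  · apply iSup_le
    intro y
    have hsum : ∑ b, U x a * U y b ≠ 0 := by
      rw [← Finset.mul_sum, hU.2.2.1 y, mul_one]; exact h
    obtain ⟨b, -, hb⟩ := Finset.exists_ne_zero_of_sum_ne_zero hsum
    have hed : G.edist a b = H.edist x y := by
      by_contra hne
      exact hb (qi_vanish hU hint hne)
    calc H.edist x y = G.edist a b := hed.symm
      _ ≤ ⨆ w, G.edist a w := le_iSup _ b
  · apply iSup_le
    intro b
    have hsum : ∑ y, U y b * U x a ≠ 0 := by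
      rw [← Finset.sum_mul, hU.2.2.2.1 b, one_mul]; exact h
    obtain ⟨y, -, hy⟩ := Finset.exists_ne_zero_of_sum_ne_zero hsum
    have hed : G.edist a b = H.edist x y := by
      by_contra hne
      exact hy (qi_vanish' hU hint hne)
    calc G.edist a b = H.edist x y := hed
      _ ≤ ⨆ w, H.edist x w := le_iSup _ y

end Aux

/-- A quantum isomorphism vanishes on pairs mixing center and non-center vertices. -/
theorem quantum_isomorphism_preserves_center {VG VH : Type*} [Fintype VG] [Fintype VH]
    (G : SimpleGraph VG) (H : SimpleGraph VH)
    [DecidableRel G.Adj] [DecidableRel H.Adj]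
    {X : Type*} [CStarAlgebra X] (U : Matrix VH VG X) (hU : IsMagicUnitary U)
    (hint : U * G.adjMatrix X = H.adjMatrix X * U) :
    (∀ (a : VG) (x : VH), a ∈ center G → x ∉ center H → U x a = 0) ∧
    (∀ (a : VG) (x : VH), a ∉ center G → x ∈ center H → U x a = 0) := by
  classical
  constructor
  · intro a x ha hx
    by_contra h
    have hxa : eccent H x = eccent G a := qi_ecc_eq hU hint h
    obtain ⟨w, hw⟩ := not_forall.mp hx
    have hw' : eccent H w < eccent H x := not_le.mp hw
    have h1 : (1 : X) ≠ 0 := by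
      intro h10
      apply h
      calc U x a = U x a * 1 := (mul_one _).symm
        _ = U x a * 0 := by rw [h10]
        _ = 0 := mul_zero _
    have hsum : ∑ c, U w c ≠ 0 := by rw [hU.2.2.1 w]; exact h1
    obtain ⟨c, -, hc⟩ := Finset.exists_ne_zero_of_sum_ne_zero hsum
    have hwc : eccent H w = eccent G c := qi_ecc_eq hU hint hc
    have : eccent G c < eccent G c :=
      (hwc ▸ hw').trans_le (hxa ▸ (ha c : eccent G a ≤ eccent G c))
    exact absurd this (lt_irrefl _)
  · intro a x ha hx
    by_contra h
    have hxa : eccent H x = eccent G a := qi_ecc_eq hU hint h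
    obtain ⟨c, hc⟩ := not_forall.mp ha
    have hc' : eccent G c < eccent G a := not_le.mp hc
    have h1 : (1 : X) ≠ 0 := by
      intro h10
      apply h
      calc U x a = U x a * 1 := (mul_one _).symm
        _ = U x a * 0 := by rw [h10]
        _ = 0 := mul_zero _
    have hsum : ∑ w, U w c ≠ 0 := by rw [hU.2.2.2.1 c]; exact h1
    obtain ⟨w, -, hw⟩ := Finset.exists_ne_zero_of_sum_ne_zero hsum
    have hwc : eccent H w = eccent G c := qi_ecc_eq hU hint hw
    have : eccent H w < eccent H w :=
      (hwc.symm ▸ hc').trans_le (hxa.symm ▸ (hx w : eccent H x ≤ eccent H w))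
    exact absurd this (lt_irrefl _)
end

section
/- Let G and H be graphs with connected components G_1,…,G_k and H_1,…,H_l respectively, and let U be a quantum isomorphism from G to H. For each component H_i of H and G_j of G, the element p_{ij} := ∑_{y ∈ V(H_i)} u_{ya} is independent of the choice of a ∈ V(G_j); moreover these p_{ij} are self-adjoint projections, p_{ij} equals ∑_{b ∈ V(G_j)} u_{xb} for any x ∈ V(H_i), each row sum ∑_j p_{ij} and column sum ∑_i p_{ij} equals 1, and consequently k = l. -/
open scoped Classical

section QI

variable {VG VH : Type*} [Fintype VG] [Fintype VH] [DecidableEq VG] [DecidableEq VH]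
    {G : SimpleGraph VG} {H : SimpleGraph VH}
    [DecidableRel G.Adj] [DecidableRel H.Adj]
    {X : Type*} [CStarAlgebra X]
    {U : Matrix VH VG X}

theorem qi_entry (hint : U * G.adjMatrix X = H.adjMatrix X * U) (x : VH) (b : VG) :
    ∑ c, (if G.Adj c b then U x c else 0) = ∑ z, (if H.Adj x z then U z b else 0) := by
  have h := congrFun (congrFun hint x) b
  simp only [Matrix.mul_apply, SimpleGraph.adjMatrix_apply, mul_ite, mul_one, mul_zero,
    ite_mul, one_mul, zero_mul] at h
  exact h

theorem qi_adj (hU : IsMagicUnitary U) (hint : U * G.adjMatrix X = H.adjMatrix X * U)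
    {x y : VH} {a b : VG} (hxy : H.Adj x y) (hab : ¬ G.Adj a b) :
    U x a * U y b = 0 := by
  obtain ⟨hsa, hid, hrow, hcol, hro, hco⟩ := hU
  have h0 : (∑ z, (if H.Adj y z then U z a else 0)) * U y b = 0 := by
    rw [← qi_entry hint y a, Finset.sum_mul]
    apply Finset.sum_eq_zero
    intro c _
    rw [ite_mul, zero_mul]
    split_ifs with hc
    · exact hro y c b (fun hcb => hab ((hcb ▸ hc).symm))
    · rfl
  calc U x a * U y b
      = ∑ z, (if H.Adj y z then U x a * (U z a * U y b) else 0) := by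
        rw [Finset.sum_eq_single x]
        · rw [if_pos hxy.symm, ← mul_assoc, hid x a]
        · intro z _ hz
          split_ifs with h
          · rw [← mul_assoc, hco a x z (Ne.symm hz), zero_mul]
          · rfl
        · intro hx; exact absurd (Finset.mem_univ x) hx
    _ = U x a * ((∑ z, (if H.Adj y z then U z a else 0)) * U y b) := by
        rw [Finset.sum_mul, Finset.mul_sum]
        exact Finset.sum_congr rfl fun z _ => by rw [ite_mul, zero_mul, mul_ite, mul_zero]
    _ = 0 := by rw [h0, mul_zero]

theorem qi_nadj (hU : IsMagicUnitary U) (hint : U * G.adjMatrix X = H.adjMatrix X * U)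
    {x y : VH} {a b : VG} (hxy : ¬ H.Adj x y) (hab : G.Adj a b) :
    U x a * U y b = 0 := by
  obtain ⟨hsa, hid, hrow, hcol, hro, hco⟩ := hU
  have h0 : U x a * (∑ z, (if H.Adj x z then U z b else 0)) = U x a := by
    rw [← qi_entry hint x b, Finset.mul_sum, Finset.sum_eq_single a]
    · rw [mul_ite, mul_zero, if_pos hab, hid x a]
    · intro c _ hc
      rw [mul_ite, mul_zero]
      split_ifs with h
      · exact hro x a c (Ne.symm hc)
      · rfl
    · intro ha; exact absurd (Finset.mem_univ a) ha
  calc U x a * U y b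
      = (U x a * (∑ z, (if H.Adj x z then U z b else 0))) * U y b := by rw [h0]
    _ = ∑ z, (if H.Adj x z then U x a * (U z b * U y b) else 0) := by
        rw [Finset.mul_sum, Finset.sum_mul]
        refine Finset.sum_congr rfl fun z _ => ?_
        rw [mul_ite, mul_zero, ite_mul, zero_mul, mul_assoc]
    _ = 0 := by
        apply Finset.sum_eq_zero
        intro z _
        split_ifs with h
        · have hz : z ≠ y := fun hzy => hxy (hzy ▸ h)
          rw [hco b z y hz, mul_zero]
        · rfl

theorem qi_walk (hU : IsMagicUnitary U) (hint : U * G.adjMatrix X = H.adjMatrix X * U)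
    {a b : VG} (w : G.Walk a b) :
    ∀ x y : VH, H.connectedComponentMk x ≠ H.connectedComponentMk y → U x a * U y b = 0 := by
  induction w with
  | nil =>
    intro x y hxy
    exact hU.2.2.2.2.2 _ x y (fun h => hxy (by rw [h]))
  | @cons p q r hadj w ih =>
    intro x y hxy
    have h1 : U x p * U y r = ∑ z, U x p * (U z q * U y r) := by
      conv_lhs => rw [← one_mul (U y r), ← hU.2.2.2.1 q, Finset.sum_mul, Finset.mul_sum]
    rw [h1]
    apply Finset.sum_eq_zero
    intro z _
    by_cases hz : H.connectedComponentMk z = H.connectedComponentMk x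
    · rw [ih z y (by rw [hz]; exact hxy), mul_zero]
    · have hnadj : ¬ H.Adj x z := fun h =>
        hz (SimpleGraph.ConnectedComponent.sound h.reachable).symm
      rw [← mul_assoc, qi_nadj hU hint hnadj hadj, zero_mul]

theorem qi_walk' (hU : IsMagicUnitary U) (hint : U * G.adjMatrix X = H.adjMatrix X * U)
    {x y : VH} (w : H.Walk x y) :
    ∀ a b : VG, G.connectedComponentMk a ≠ G.connectedComponentMk b → U x a * U y b = 0 := by
  induction w with
  | nil =>
    intro a b hab
    exact hU.2.2.2.2.1 _ a b (fun h => hab (by rw [h]))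
  | @cons p q r hadj w ih =>
    intro a b hab
    have h1 : U p a * U r b = ∑ c, U p a * (U q c * U r b) := by
      conv_lhs => rw [← one_mul (U r b), ← hU.2.2.1 q, Finset.sum_mul, Finset.mul_sum]
    rw [h1]
    apply Finset.sum_eq_zero
    intro c _
    by_cases hc : G.connectedComponentMk c = G.connectedComponentMk a
    · rw [ih c b (by rw [hc]; exact hab), mul_zero]
    · have hnadj : ¬ G.Adj a c := fun h =>
        hc (SimpleGraph.ConnectedComponent.sound h.reachable).symm
      rw [← mul_assoc, qi_adj hU hint hadj hnadj, zero_mul]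

theorem qi_comp (hU : IsMagicUnitary U) (hint : U * G.adjMatrix X = H.adjMatrix X * U)
    {x y : VH} {a b : VG} (hxy : H.connectedComponentMk x ≠ H.connectedComponentMk y)
    (hab : G.connectedComponentMk a = G.connectedComponentMk b) :
    U x a * U y b = 0 := by
  obtain ⟨w⟩ := SimpleGraph.ConnectedComponent.exact hab
  exact qi_walk hU hint w x y hxy

theorem qi_comp' (hU : IsMagicUnitary U) (hint : U * G.adjMatrix X = H.adjMatrix X * U)
    {x y : VH} {a b : VG} (hxy : H.connectedComponentMk x = H.connectedComponentMk y)
    (hab : G.connectedComponentMk a ≠ G.connectedComponentMk b) :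
    U x a * U y b = 0 := by
  obtain ⟨w⟩ := SimpleGraph.ConnectedComponent.exact hxy
  exact qi_walk' hU hint w a b hab

end QI
section QI2

variable {VG VH : Type*} [Fintype VG] [Fintype VH] [DecidableEq VG] [DecidableEq VH]
    {G : SimpleGraph VG} {H : SimpleGraph VH}
    [DecidableRel G.Adj] [DecidableRel H.Adj]
    {X : Type*} [CStarAlgebra X]
    {U : Matrix VH VG X}

/-- Sum of a column of `U` over a connected component of `H`. -/
noncomputable def qiS (H : SimpleGraph VH) (U : Matrix VH VG X) (a : VG)
    (i : H.ConnectedComponent) : X :=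
  ∑ y : VH, (if H.connectedComponentMk y = i then U y a else 0)

/-- Sum of a row of `U` over a connected component of `G`. -/
noncomputable def qiQ (G : SimpleGraph VG) (U : Matrix VH VG X) (x : VH)
    (j : G.ConnectedComponent) : X :=
  ∑ b : VG, (if G.connectedComponentMk b = j then U x b else 0)

theorem qiS_split (hU : IsMagicUnitary U) (a : VG) (i : H.ConnectedComponent) :
    qiS H U a i + (∑ y : VH, (if H.connectedComponentMk y = i then 0 else U y a)) = 1 := by
  rw [qiS, ← Finset.sum_add_distrib, ← hU.2.2.2.1 a]
  exact Finset.sum_congr rfl fun y _ => by split_ifs <;> simp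

theorem qiQ_split (hU : IsMagicUnitary U) (x : VH) (j : G.ConnectedComponent) :
    qiQ G U x j + (∑ b : VG, (if G.connectedComponentMk b = j then 0 else U x b)) = 1 := by
  rw [qiQ, ← Finset.sum_add_distrib, ← hU.2.2.1 x]
  exact Finset.sum_congr rfl fun b _ => by split_ifs <;> simp

theorem qiS_mul_left (hU : IsMagicUnitary U) (hint : U * G.adjMatrix X = H.adjMatrix X * U)
    (i : H.ConnectedComponent) {a b : VG}
    (hab : G.connectedComponentMk a = G.connectedComponentMk b) :
    qiS H U a i * qiS H U b i = qiS H U a i := by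
  have hz : qiS H U a i * (∑ y : VH, (if H.connectedComponentMk y = i then 0 else U y b)) = 0 := by
    rw [qiS, Finset.sum_mul]
    apply Finset.sum_eq_zero; intro x _
    rw [ite_mul, zero_mul, Finset.mul_sum]
    split_ifs with h1
    · apply Finset.sum_eq_zero; intro y _
      rw [mul_ite, mul_zero]
      split_ifs with h2
      · rfl
      · exact qi_comp hU hint (by rw [h1]; exact fun h => h2 h.symm) hab
    · rfl
  calc qiS H U a i * qiS H U b i
      = qiS H U a i * (qiS H U b i + ∑ y : VH, (if H.connectedComponentMk y = i then 0 else U y b)) := by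
        rw [mul_add, hz, add_zero]
    _ = qiS H U a i := by rw [qiS_split hU b i, mul_one]

theorem qiS_mul_right (hU : IsMagicUnitary U) (hint : U * G.adjMatrix X = H.adjMatrix X * U)
    (i : H.ConnectedComponent) {a b : VG}
    (hab : G.connectedComponentMk a = G.connectedComponentMk b) :
    qiS H U a i * qiS H U b i = qiS H U b i := by
  have hz : (∑ y : VH, (if H.connectedComponentMk y = i then 0 else U y a)) * qiS H U b i = 0 := by
    rw [qiS, Finset.sum_mul]
    apply Finset.sum_eq_zero; intro x _
    rw [ite_mul, zero_mul, Finset.mul_sum]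
    split_ifs with h1
    · rfl
    · apply Finset.sum_eq_zero; intro y _
      rw [mul_ite, mul_zero]
      split_ifs with h2
      · exact qi_comp hU hint (by rw [h2]; exact fun h => h1 h) hab
      · rfl
  calc qiS H U a i * qiS H U b i
      = (qiS H U a i + ∑ y : VH, (if H.connectedComponentMk y = i then 0 else U y a)) * qiS H U b i := by
        rw [add_mul, hz, add_zero]
    _ = qiS H U b i := by rw [qiS_split hU a i, one_mul]

theorem qiS_eq (hU : IsMagicUnitary U) (hint : U * G.adjMatrix X = H.adjMatrix X * U)
    (i : H.ConnectedComponent) {a b : VG}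
    (hab : G.connectedComponentMk a = G.connectedComponentMk b) :
    qiS H U a i = qiS H U b i := by
  rw [← qiS_mul_left hU hint i hab, qiS_mul_right hU hint i hab]

theorem qiQ_eq_qiS (hU : IsMagicUnitary U) (hint : U * G.adjMatrix X = H.adjMatrix X * U)
    {x : VH} {a : VG} {i : H.ConnectedComponent} {j : G.ConnectedComponent}
    (hx : H.connectedComponentMk x = i) (ha : G.connectedComponentMk a = j) :
    qiQ G U x j = qiS H U a i := by
  -- (1 - qiS a i) * qiQ x j = 0
  have hz1 : (∑ y : VH, (if H.connectedComponentMk y = i then 0 else U y a)) * qiQ G U x j = 0 := by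
    rw [qiQ, Finset.sum_mul]
    apply Finset.sum_eq_zero; intro y _
    rw [ite_mul, zero_mul, Finset.mul_sum]
    split_ifs with h1
    · rfl
    · apply Finset.sum_eq_zero; intro b _
      rw [mul_ite, mul_zero]
      split_ifs with h2
      · exact qi_comp hU hint (by rw [hx]; exact fun h => h1 h) (by rw [ha, h2])
      · rfl
  -- qiS a i * (1 - qiQ x j) = 0
  have hz2 : qiS H U a i * (∑ b : VG, (if G.connectedComponentMk b = j then 0 else U x b)) = 0 := by
    rw [qiS, Finset.sum_mul]
    apply Finset.sum_eq_zero; intro y _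
    rw [ite_mul, zero_mul, Finset.mul_sum]
    split_ifs with h1
    · apply Finset.sum_eq_zero; intro b _
      rw [mul_ite, mul_zero]
      split_ifs with h2
      · rfl
      · exact qi_comp' hU hint (by rw [h1, hx]) (by rw [ha]; exact fun h => h2 h.symm)
    · rfl
  have e1 : qiS H U a i * qiQ G U x j = qiQ G U x j := by
    calc qiS H U a i * qiQ G U x j
        = (qiS H U a i + ∑ y : VH, (if H.connectedComponentMk y = i then 0 else U y a)) * qiQ G U x j := by
          rw [add_mul, hz1, add_zero]
      _ = qiQ G U x j := by rw [qiS_split hU a i, one_mul]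
  have e2 : qiS H U a i * qiQ G U x j = qiS H U a i := by
    calc qiS H U a i * qiQ G U x j
        = qiS H U a i * (qiQ G U x j + ∑ b : VG, (if G.connectedComponentMk b = j then 0 else U x b)) := by
          rw [mul_add, hz2, add_zero]
      _ = qiS H U a i := by rw [qiQ_split hU x j, mul_one]
  rw [← e1, e2]

end QI2

/-- For a quantum isomorphism U from G to H, summing the entries of U over a connected
component of H does not depend on the chosen vertex within a connected component of G;
the resulting elements p_{ij} are self-adjoint projections, agree with the transposed
sums over components of G, and form a square magic-unitary-like family, so that G and H
have the same number of connected components. -/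
theorem quantum_isomorphism_component_projections
    {VG VH : Type*} [Fintype VG] [Fintype VH] [DecidableEq VG] [DecidableEq VH]
    (G : SimpleGraph VG) (H : SimpleGraph VH)
    [DecidableRel G.Adj] [DecidableRel H.Adj]
    {X : Type*} [CStarAlgebra X] [Nontrivial X]
    (U : Matrix VH VG X) (hU : IsMagicUnitary U)
    (hint : U * G.adjMatrix X = H.adjMatrix X * U) :
    (∃ p : H.ConnectedComponent → G.ConnectedComponent → X,
      (∀ i j, IsSelfAdjoint (p i j) ∧ p i j * p i j = p i j) ∧
      (∀ i j (a : VG), G.connectedComponentMk a = j →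
        ∑ y : VH, (if H.connectedComponentMk y = i then U y a else 0) = p i j) ∧
      (∀ i j (x : VH), H.connectedComponentMk x = i →
        ∑ b : VG, (if G.connectedComponentMk b = j then U x b else 0) = p i j) ∧
      (∀ i, ∑ j, p i j = 1) ∧ (∀ j, ∑ i, p i j = 1)) ∧
    Nat.card H.ConnectedComponent = Nat.card G.ConnectedComponent := by
  have hout : ∀ j : G.ConnectedComponent, G.connectedComponentMk (Quot.out j) = j :=
    fun j => Quot.out_eq j
  have houtH : ∀ i : H.ConnectedComponent, H.connectedComponentMk (Quot.out i) = i :=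
    fun i => Quot.out_eq i
  set p : H.ConnectedComponent → G.ConnectedComponent → X :=
    fun i j => qiS H U (Quot.out j) i with hp
  have h2 : ∀ i j (a : VG), G.connectedComponentMk a = j →
      (∑ y : VH, (if H.connectedComponentMk y = i then U y a else 0)) = p i j := by
    intro i j a ha
    exact qiS_eq hU hint i (by rw [ha, hout j])
  have h3 : ∀ i j (x : VH), H.connectedComponentMk x = i →
      (∑ b : VG, (if G.connectedComponentMk b = j then U x b else 0)) = p i j := by
    intro i j x hx
    exact qiQ_eq_qiS hU hint hx (hout j)
  have hrowsum : ∀ i, ∑ j, p i j = 1 := by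
    intro i
    have : ∀ j, p i j = qiQ G U (Quot.out i) j := fun j =>
      (qiQ_eq_qiS hU hint (houtH i) (hout j)).symm
    rw [Finset.sum_congr rfl fun j _ => this j]
    unfold qiQ
    rw [Finset.sum_comm]
    rw [show ∑ b : VG, ∑ j : G.ConnectedComponent,
        (if G.connectedComponentMk b = j then U (Quot.out i) b else 0)
        = ∑ b : VG, U (Quot.out i) b from
      Finset.sum_congr rfl fun b _ => by rw [Finset.sum_ite_eq]; simp]
    exact hU.2.2.1 _
  have hcolsum : ∀ j, ∑ i, p i j = 1 := by
    intro j
    simp only [hp, qiS]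
    rw [Finset.sum_comm]
    rw [show ∑ y : VH, ∑ i : H.ConnectedComponent,
        (if H.connectedComponentMk y = i then U y (Quot.out j) else 0)
        = ∑ y : VH, U y (Quot.out j) from
      Finset.sum_congr rfl fun y _ => by rw [Finset.sum_ite_eq]; simp]
    exact hU.2.2.2.1 _
  have hproj : ∀ i j, IsSelfAdjoint (p i j) ∧ p i j * p i j = p i j := by
    intro i j
    constructor
    · show star _ = _
      simp only [hp, qiS, star_sum]
      refine Finset.sum_congr rfl fun y _ => ?_
      split_ifs
      · exact hU.1 y _
      · exact star_zero _
    · exact qiS_mul_left hU hint i rfl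
  refine ⟨⟨p, hproj, h2, h3, hrowsum, hcolsum⟩, ?_⟩
  have hchar : CharZero X := charZero_of_injective_algebraMap (algebraMap ℂ X).injective
  have hsum : (Fintype.card H.ConnectedComponent) • (1 : X)
      = (Fintype.card G.ConnectedComponent) • (1 : X) := by
    calc (Fintype.card H.ConnectedComponent) • (1 : X)
        = ∑ i : H.ConnectedComponent, ∑ j : G.ConnectedComponent, p i j := by
          rw [Finset.sum_congr rfl fun i _ => hrowsum i, Finset.sum_const, Finset.card_univ]
      _ = ∑ j : G.ConnectedComponent, ∑ i : H.ConnectedComponent, p i j := Finset.sum_comm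
      _ = (Fintype.card G.ConnectedComponent) • (1 : X) := by
          rw [Finset.sum_congr rfl fun j _ => hcolsum j, Finset.sum_const, Finset.card_univ]
  have : (Fintype.card H.ConnectedComponent : X) = (Fintype.card G.ConnectedComponent : X) := by
    simpa [nsmul_eq_mul] using hsum
  have hcard : Fintype.card H.ConnectedComponent = Fintype.card G.ConnectedComponent :=
    Nat.cast_injective this
  rw [Nat.card_eq_fintype_card, Nat.card_eq_fintype_card]
  exact hcard
end

section
/- If a quantum isomorphism U from G to H has pairwise commuting entries, then G and H are isomorphic as graphs. -/
section CommCloAux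

variable {X : Type*} [Ring X]

/-- A set whose elements pairwise commute. -/
class CommSet (s : Set X) : Prop where
  comm : ∀ x ∈ s, ∀ y ∈ s, x * y = y * x

/-- Type synonym for the subring generated by a commuting set (to avoid instance diamonds). -/
def CommClo (s : Set X) : Type _ := Subring.closure s

variable {s : Set X}

noncomputable instance [CommSet s] : CommRing (CommClo s) :=
  Subring.closureCommRingOfComm CommSet.comm

/-- Wrap an element. -/
def CommClo.of [CommSet s] (x : X) (hx : x ∈ Subring.closure s) : CommClo s := ⟨x, hx⟩

/-- The inclusion ring hom. -/
def CommClo.valHom [CommSet s] : CommClo s →+* X :=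
  { toFun := Subtype.val
    map_one' := rfl
    map_mul' := fun _ _ => rfl
    map_zero' := rfl
    map_add' := fun _ _ => rfl }

@[simp] lemma CommClo.valHom_of [CommSet s] (x : X) (hx : x ∈ Subring.closure s) :
    CommClo.valHom (CommClo.of x hx) = x := rfl

lemma CommClo.valHom_injective [CommSet s] :
    Function.Injective (CommClo.valHom (s := s)) := fun _ _ h => Subtype.ext h

instance [CommSet s] [Nontrivial X] : Nontrivial (CommClo s) :=
  ⟨1, 0, fun h => by
    have h1 : CommClo.valHom (s := s) 1 = CommClo.valHom 0 := congrArg _ h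
    rw [map_one, map_zero] at h1
    exact one_ne_zero h1⟩

end CommCloAux

/-- The combinatorial core: a field-valued "magic permutation matrix" intertwining the
adjacency matrices yields a graph isomorphism. -/
theorem aux_iso_of_field_rep
    {VG VH : Type*} [Fintype VG] [Fintype VH]
    (G : SimpleGraph VG) (H : SimpleGraph VH)
    [DecidableRel G.Adj] [DecidableRel H.Adj]
    {k : Type*} [CommRing k] [IsDomain k] (e : VH → VG → k)
    (heidem : ∀ x a, e x a * e x a = e x a)
    (herow : ∀ x, ∑ a, e x a = 1)
    (hecol : ∀ a, ∑ x, e x a = 1)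
    (heor : ∀ x a b, a ≠ b → e x a * e x b = 0)
    (heoc : ∀ a x y, x ≠ y → e x a * e y a = 0)
    (hk : ∀ x b, (∑ a, (if G.Adj a b then e x a else 0))
        = ∑ y, (if H.Adj x y then e y b else 0)) :
    Nonempty (G ≃g H) := by
  classical
  have h01 : ∀ x a, e x a = 0 ∨ e x a = 1 := by
    intro x a
    have h : e x a * (e x a - 1) = 0 := by
      rw [mul_sub, mul_one, heidem, sub_self]
    rcases mul_eq_zero.mp h with h' | h'
    · exact Or.inl h'
    · exact Or.inr (sub_eq_zero.mp h')
  have hexrow : ∀ x, ∃! a, e x a = 1 := by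
    intro x
    have hne : ∃ a, e x a ≠ 0 := by
      by_contra h
      push_neg at h
      have h1 := herow x
      rw [Finset.sum_eq_zero (fun a _ => h a)] at h1
      exact one_ne_zero h1.symm
    obtain ⟨a, ha⟩ := hne
    have ha1 : e x a = 1 := (h01 x a).resolve_left ha
    refine ⟨a, ha1, fun b hb => ?_⟩
    by_contra hba
    have h2 := heor x b a hba
    rw [hb, ha1, mul_one] at h2
    exact one_ne_zero h2
  have hexcol : ∀ a, ∃! x, e x a = 1 := by
    intro a
    have hne : ∃ x, e x a ≠ 0 := by
      by_contra h
      push_neg at h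
      have h1 := hecol a
      rw [Finset.sum_eq_zero (fun y _ => h y)] at h1
      exact one_ne_zero h1.symm
    obtain ⟨x, hx⟩ := hne
    have hx1 : e x a = 1 := (h01 x a).resolve_left hx
    refine ⟨x, hx1, fun y hy => ?_⟩
    by_contra hyx
    have h2 := heoc a y x hyx
    rw [hy, hx1, mul_one] at h2
    exact one_ne_zero h2
  choose f hf hf' using hexrow
  choose g hg hg' using hexcol
  have hgf : ∀ x, g (f x) = x := fun x => (hg' (f x) x (hf x)).symm
  have hfg : ∀ a, f (g a) = a := fun a => (hf' (g a) a (hg a)).symm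
  have hzero : ∀ x a, a ≠ f x → e x a = 0 := by
    intro x a ha
    rcases h01 x a with h | h
    · exact h
    · exact absurd (hf' x a h) ha
  have hzero' : ∀ a x, x ≠ g a → e x a = 0 := by
    intro a x hx
    rcases h01 x a with h | h
    · exact h
    · exact absurd (hg' a x h) hx
  have hadj : ∀ x b, G.Adj (f x) b ↔ H.Adj x (g b) := by
    intro x b
    have hL : (∑ a, (if G.Adj a b then e x a else 0))
        = (if G.Adj (f x) b then (1 : k) else 0) := by
      rw [Finset.sum_eq_single (f x)]
      · rw [hf x]
      · intro a _ ha
        simp [hzero x a ha]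
      · simp
    have hR : (∑ y, (if H.Adj x y then e y b else 0))
        = (if H.Adj x (g b) then (1 : k) else 0) := by
      rw [Finset.sum_eq_single (g b)]
      · rw [hg b]
      · intro y _ hy
        simp [hzero' b y hy]
      · simp
    have key : (if G.Adj (f x) b then (1 : k) else 0)
        = (if H.Adj x (g b) then 1 else 0) := by
      rw [← hL, hk x b, hR]
    constructor
    · intro h
      rw [if_pos h] at key
      by_contra h'
      rw [if_neg h'] at key
      exact one_ne_zero key
    · intro h
      rw [if_pos h] at key
      by_contra h'
      rw [if_neg h'] at key
      exact one_ne_zero key.symm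
  refine ⟨⟨⟨g, f, hfg, hgf⟩, ?_⟩⟩
  intro a b
  show H.Adj (g a) (g b) ↔ G.Adj a b
  rw [← hadj (g a) b, hfg a]

set_option synthInstance.maxHeartbeats 1000000 in
set_option maxHeartbeats 4000000 in
/-- If a quantum isomorphism from G to H has pairwise commuting entries, then
G and H are isomorphic as graphs. -/
theorem isomorphic_of_commutative_quantum_isomorphism
    {VG VH : Type*} [Fintype VG] [Fintype VH]
    (G : SimpleGraph VG) (H : SimpleGraph VH)
    [DecidableRel G.Adj] [DecidableRel H.Adj]
    {X : Type*} [CStarAlgebra X] [Nontrivial X]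
    (U : Matrix VH VG X) (hU : IsMagicUnitary U)
    (hint : U * G.adjMatrix X = H.adjMatrix X * U)
    (hcomm : ∀ x a y b, Commute (U x a) (U y b)) :
    Nonempty (G ≃g H) := by
  classical
  obtain ⟨-, hidem, hrow, hcol, horthr, horthc⟩ := hU
  set s : Set X := Set.range (fun p : VH × VG => U p.1 p.2) with hs
  haveI : CommSet s := ⟨by
    rintro _ ⟨⟨i, j⟩, rfl⟩ _ ⟨⟨k, l⟩, rfl⟩
    exact hcomm i j k l⟩
  obtain ⟨m, hm⟩ := Ideal.exists_maximal (CommClo s)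
  haveI : m.IsPrime := hm.isPrime
  set φ : CommClo s →+* CommClo s ⧸ m := Ideal.Quotient.mk m with hφ
  have hmemS : ∀ x a, U x a ∈ Subring.closure s :=
    fun x a => Subring.subset_closure ⟨(x, a), rfl⟩
  set u' : VH → VG → CommClo s := fun x a => CommClo.of (U x a) (hmemS x a) with hu'
  set e : VH → VG → CommClo s ⧸ m := fun x a => φ (u' x a) with he
  have hinj := CommClo.valHom_injective (s := s)
  -- properties of e
  have heidem : ∀ x a, e x a * e x a = e x a := by
    intro x a
    have h : u' x a * u' x a = u' x a := by
      apply hinj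
      rw [map_mul]
      simp only [hu', CommClo.valHom_of]
      exact hidem x a
    rw [he]
    dsimp only
    rw [← map_mul, h]
  have herow : ∀ x, ∑ a, e x a = 1 := by
    intro x
    have h : (∑ a, u' x a) = 1 := by
      apply hinj
      rw [map_sum, map_one]
      simp only [hu', CommClo.valHom_of]
      exact hrow x
    rw [he]
    dsimp only
    rw [← map_sum, h, map_one]
  have hecol : ∀ a, ∑ x, e x a = 1 := by
    intro a
    have h : (∑ x, u' x a) = 1 := by
      apply hinj
      rw [map_sum, map_one]
      simp only [hu', CommClo.valHom_of]
      exact hcol a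
    rw [he]
    dsimp only
    rw [← map_sum, h, map_one]
  have heor : ∀ x a b, a ≠ b → e x a * e x b = 0 := by
    intro x a b hab
    have h : u' x a * u' x b = 0 := by
      apply hinj
      rw [map_mul, map_zero]
      simp only [hu', CommClo.valHom_of]
      exact horthr x a b hab
    rw [he]
    dsimp only
    rw [← map_mul, h, map_zero]
  have heoc : ∀ a x y, x ≠ y → e x a * e y a = 0 := by
    intro a x y hxy
    have h : u' x a * u' y a = 0 := by
      apply hinj
      rw [map_mul, map_zero]
      simp only [hu', CommClo.valHom_of]
      exact horthc a x y hxy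
    rw [he]
    dsimp only
    rw [← map_mul, h, map_zero]
  have hk : ∀ x b, (∑ a, (if G.Adj a b then e x a else 0))
      = ∑ y, (if H.Adj x y then e y b else 0) := by
    intro x b
    have hX : ∑ a, (if G.Adj a b then U x a else 0)
        = ∑ y, (if H.Adj x y then U y b else 0) := by
      have h := congrFun (congrFun hint x) b
      rw [Matrix.mul_apply, Matrix.mul_apply] at h
      simpa [SimpleGraph.adjMatrix, Matrix.of_apply, mul_ite, ite_mul,
        mul_one, mul_zero, one_mul, zero_mul] using h
    have hS' : (∑ a, (if G.Adj a b then u' x a else 0))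
        = ∑ y, (if H.Adj x y then u' y b else 0) := by
      apply hinj
      rw [map_sum, map_sum]
      simpa [hu', apply_ite (CommClo.valHom (s := s))] using hX
    have h := congrArg φ hS'
    rw [map_sum, map_sum] at h
    simpa [he, apply_ite φ] using h
  exact aux_iso_of_field_rep G H e heidem herow hecol heor heoc hk
end
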